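/- Let G = (V,E) be an undirected connected unweighted graph, S ⊆ V nonempty, v ∈ V\S with dist(S,v) = 1, and let B_S be the BFS DAG rooted at S with D_v the vertices reachable from v in B_S. Then for every x ∉ D_v, dist(S,x) = dist(S∪{v}, x); i.e., adding v changes the distance only of vertices in D_v. -/

import Mathlib

/-!
If adding `v` strictly shortens the distance from `S` to `x`, then a shortest walk from `v`
to `x` has length `ℓ < dist(S, x) ≤ dist(S, v) + ℓ = 1 + ℓ`. Since `dist(S, ·)` grows by at most
one per edge, it must grow by exactly one along every edge of that walk, which is therefore a
path of `B_S` starting at `v`, so `x ∈ D_v`.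
-/

open SimpleGraph Finset

/-- Distance from a group `S` to a vertex `x` in an unweighted graph. -/
noncomputable def setDist {V : Type*} (G : SimpleGraph V) (S : Finset V) (x : V) : ℕ :=
  sInf {d | ∃ s ∈ S, G.dist s x = d}

/-- Farness of a group `S`. -/
noncomputable def farness {V : Type*} [Fintype V] [DecidableEq V]
    (G : SimpleGraph V) (S : Finset V) : ℕ :=
  ∑ x ∈ Sᶜ, setDist G S x

/-- Edge relation of the BFS DAG rooted at `S`. -/
def bfsEdge {V : Type*} (G : SimpleGraph V) (S : Finset V) (x y : V) : Prop :=
  G.Adj x y ∧ setDist G S y = setDist G S x + 1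

/-- Vertices reachable from `v` in the BFS DAG rooted at `S` (including `v`). -/
def reach {V : Type*} (G : SimpleGraph V) (S : Finset V) (v : V) : Set V :=
  {x | Relation.ReflTransGen (bfsEdge G S) v x}

section SetDist

variable {V : Type*} {G : SimpleGraph V} {S : Finset V}

theorem exists_mem_dist_eq_setDist (hS : S.Nonempty) (x : V) :
    ∃ s ∈ S, G.dist s x = setDist G S x := by
  obtain ⟨s, hs⟩ := hS
  exact Nat.sInf_mem (s := {d | ∃ s ∈ S, G.dist s x = d}) ⟨_, s, hs, rfl⟩

theorem setDist_le_dist {s : V} (hs : s ∈ S) (x : V) : setDist G S x ≤ G.dist s x :=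
  Nat.sInf_le ⟨s, hs, rfl⟩

theorem setDist_le_of_subset {T : Finset V} (hS : S.Nonempty) (hST : S ⊆ T) (x : V) :
    setDist G T x ≤ setDist G S x := by
  obtain ⟨s, hs, hsx⟩ := exists_mem_dist_eq_setDist (G := G) hS x
  exact hsx ▸ setDist_le_dist (hST hs) x

theorem setDist_le_add_length (hS : S.Nonempty) {y x : V} (p : G.Walk y x) :
    setDist G S x ≤ setDist G S y + p.length := by
  obtain ⟨s, hs, hsy⟩ := exists_mem_dist_eq_setDist (G := G) hS y
  calc setDist G S x ≤ G.dist s x := setDist_le_dist hs x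
    _ ≤ G.dist s y + G.dist y x := p.reachable.dist_triangle_right s
    _ ≤ setDist G S y + p.length := hsy ▸ Nat.add_le_add_left (dist_le p) _

theorem reflTransGen_bfsEdge_of_setDist_eq_add_length (hS : S.Nonempty) {w x : V}
    (p : G.Walk w x) (hp : setDist G S x = setDist G S w + p.length) :
    Relation.ReflTransGen (bfsEdge G S) w x := by
  induction p with
  | nil => exact .refl
  | @cons w y x hadj q ih =>
    have hwy := setDist_le_add_length hS hadj.toWalk
    have hyx := setDist_le_add_length hS q
    rw [Walk.length_cons] at hp
    rw [Walk.length_cons, Walk.length_nil] at hwy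
    exact .head ⟨hadj, by omega⟩ (ih (by omega))

end SetDist

theorem stmt8_general {V : Type*} [DecidableEq V] (G : SimpleGraph V)
    (hconn : G.Connected) (S : Finset V) (hS : S.Nonempty)
    (v : V) (hdist : setDist G S v = 1) :
    ∀ x : V, x ∉ reach G S v → setDist G S x = setDist G (insert v S) x := by
  intro x hx
  refine le_antisymm ?_ (setDist_le_of_subset hS (subset_insert v S) x)
  obtain ⟨s, hs, hsx⟩ := exists_mem_dist_eq_setDist (G := G) (insert_nonempty v S) x
  rcases mem_insert.mp hs with rfl | hsS
  · by_contra! hlt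
    obtain ⟨p, hp⟩ := hconn.exists_walk_length_eq_dist s x
    have hle := setDist_le_add_length hS p
    exact hx (reflTransGen_bfsEdge_of_setDist_eq_add_length hS p (by omega))
  · exact hsx ▸ setDist_le_dist hsS x

theorem stmt8 {V : Type*} [Fintype V] [DecidableEq V] (G : SimpleGraph V)
    (hconn : G.Connected) (S : Finset V) (hS : S.Nonempty)
    (v : V) (hv : v ∉ S) (hdist : setDist G S v = 1) :
    ∀ x : V, x ∉ reach G S v → setDist G S x = setDist G (insert v S) x :=
  stmt8_general G hconn S hS v hdist
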